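/- arXiv:1411.4957 — 2 statements merged into one kernel-verified Lean document; each statement's English description precedes it below -/
import Mathlib

section
/- Let k, r be natural numbers, let 𝒢 be a k-complex with e_k(𝒢) ≥ (r-1)·e_{k-1}(𝒢) + 1, fix 0 ≤ j ≤ k-1, and suppose e is an edge of 𝒢^(j) which lies in fewer than (k-j)·r edges of 𝒢^(j+1). Let 𝒢' be the k-complex obtained from 𝒢 by deleting e and every edge of 𝒢 containing e. Then e_k(𝒢') ≥ (r-1)·e_{k-1}(𝒢') + 1. -/
/-! Removing `e` and its supersets only deletes edges of the star of `e`, so it suffices that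
the star has at most `r - 1` times as many `k`-edges as `(k-1)`-edges. These are the edges of
sizes `k - j` and `k - j - 1` of the link of `e`, a complex with fewer than `(k - j) r` vertices
by the degree assumption, and local LYM in the link gives exactly this ratio. -/

open Finset

variable {V : Type*} [DecidableEq V]

/-- The number of edges of cardinality `j` of a hypergraph. -/
def ecount (G : Finset (Finset V)) (j : ℕ) : ℕ := (G.filter fun e => e.card = j).card

omit [DecidableEq V] in
theorem ecount_filter_add_ecount_filter_not (G : Finset (Finset V)) (p : Finset V → Prop)
    [DecidablePred p] (t : ℕ) :
    ecount (G.filter p) t + ecount (G.filter fun f => ¬ p f) t = ecount G t := by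
  simp only [ecount, filter_comm _ (fun f : Finset V => f.card = t)]
  exact card_filter_add_card_filter_not _

def link (G : Finset (Finset V)) (e : Finset V) : Finset (Finset V) :=
  (G.filter (e ⊆ ·)).image (· \ e)

theorem isLowerSet_link {G : Finset (Finset V)} (hG : IsLowerSet (G : Set (Finset V)))
    (e : Finset V) : IsLowerSet (link G e : Set (Finset V)) := by
  simp only [link, coe_image, coe_filter]
  rintro _ h hh ⟨f, ⟨hf, hef⟩, rfl⟩
  have hdisj : Disjoint h e := disjoint_of_subset_left hh sdiff_disjoint
  refine ⟨h ∪ e, ⟨hG (union_subset (hh.trans sdiff_subset) hef) hf, subset_union_right⟩, ?_⟩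
  exact union_sdiff_cancel_right hdisj

theorem ecount_link (G : Finset (Finset V)) (e : Finset V) (t : ℕ) :
    ecount (link G e) t = ecount (G.filter (e ⊆ ·)) (e.card + t) := by
  rw [ecount, link, filter_image, card_image_of_injOn, ecount]
  · refine congrArg card (filter_congr fun f hf => ?_)
    rw [card_sdiff_of_subset (mem_filter.1 hf).2]
    have := card_le_card (mem_filter.1 hf).2
    omega
  · exact (superset_injOn_sdiff e).mono fun f hf => (mem_filter.1 (mem_filter.1 hf).1).2

theorem card_superset_filter_le {H : Finset (Finset V)} (hH : IsLowerSet (H : Set (Finset V)))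
    {g : Finset V} (hg : g ∈ H) :
    #((H.filter (·.card = g.card + 1)).filter (g ⊆ ·)) ≤ ecount H 1 - g.card := by
  have hsingletons : g.image singleton ⊆ H.filter (·.card = 1) := by
    simp only [subset_iff, mem_image, mem_filter]
    rintro _ ⟨x, hx, rfl⟩
    exact ⟨hH (singleton_subset_iff.2 hx) hg, card_singleton x⟩
  calc _ ≤ #(H.filter (·.card = 1) \ g.image singleton) := by
        -- `f ↦ f \ g` sends each `f ⊃ g` one size up to a vertex `{x}` of `H` outside `g`
        refine card_le_card_of_injOn (· \ g) (fun f hf => ?_)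
          ((superset_injOn_sdiff g).mono fun f hf => (mem_filter.1 hf).2)
        rw [mem_coe, mem_filter, mem_filter] at hf
        obtain ⟨⟨hfH, hfcard⟩, hgf⟩ := hf
        obtain ⟨x, hx⟩ : ∃ x, f \ g = {x} := by
          rw [← card_eq_one, card_sdiff_of_subset hgf, hfcard, Nat.add_sub_cancel_left]
        have hxg : x ∉ g := (mem_sdiff.1 (hx ▸ mem_singleton_self x)).2
        simp only [mem_coe, hx, mem_sdiff, mem_filter, mem_image]
        refine ⟨⟨hH (hx ▸ sdiff_subset) hfH, card_singleton x⟩, ?_⟩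
        rintro ⟨y, hy, hyx⟩
        exact hxg (singleton_injective hyx ▸ hy)
    _ = ecount H 1 - g.card := by
        rw [card_sdiff_of_subset hsingletons, card_image_of_injective g singleton_injective, ecount]

theorem ecount_succ_mul_le_ecount_mul {H : Finset (Finset V)}
    (hH : IsLowerSet (H : Set (Finset V))) (i : ℕ) :
    ecount H (i + 1) * (i + 1) ≤ ecount H i * (ecount H 1 - i) := by
  refine card_mul_le_card_mul (fun f g => g ⊆ f) (fun f hf => ?_) (fun g hg => ?_)
  · obtain ⟨hfH, hfcard⟩ := mem_filter.1 hf
    rw [← hfcard]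
    refine card_le_card_of_injOn f.erase (fun x hx => ?_) f.erase_injOn
    refine mem_filter.2 ⟨mem_filter.2 ⟨hH (erase_subset x f) hfH, ?_⟩, erase_subset x f⟩
    rw [card_erase_of_mem hx, hfcard, Nat.add_sub_cancel]
  · obtain ⟨hgH, rfl⟩ := mem_filter.1 hg
    exact card_superset_filter_le hH hgH

theorem delete_low_degree_general (k r j : ℕ) (hj : j + 1 ≤ k) (𝒢 : Finset (Finset V))
    (hdown : ∀ e ∈ 𝒢, ∀ f, f ⊆ e → f ∈ 𝒢)
    (hcount : (r - 1) * ecount 𝒢 (k - 1) + 1 ≤ ecount 𝒢 k)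
    (e : Finset V) (hecard : e.card = j)
    (hdeg : (𝒢.filter fun f => f.card = j + 1 ∧ e ⊆ f).card < (k - j) * r) :
    (r - 1) * ecount (𝒢.filter fun f => ¬ e ⊆ f) (k - 1) + 1 ≤
      ecount (𝒢.filter fun f => ¬ e ⊆ f) k := by
  have hlym := ecount_succ_mul_le_ecount_mul
    (isLowerSet_link (fun f g hgf hf => hdown f hf g hgf) e) (k - j - 1)
  rw [ecount_link, ecount_link, ecount_link, hecard, show j + (k - j - 1 + 1) = k by omega,
    show j + (k - j - 1) = k - 1 by omega, show k - j - 1 + 1 = k - j by omega] at hlym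
  have hN : ecount (𝒢.filter (e ⊆ ·)) (j + 1) < (k - j) * r := by
    simpa only [ecount, filter_filter, and_comm] using hdeg
  have hAB : ecount (𝒢.filter (e ⊆ ·)) k ≤ (r - 1) * ecount (𝒢.filter (e ⊆ ·)) (k - 1) := by
    have hlink_vertices : ecount (𝒢.filter (e ⊆ ·)) (j + 1) - (k - j - 1) ≤ (k - j) * (r - 1) := by
      rw [Nat.mul_sub_one]; omega
    refine Nat.le_of_mul_le_mul_right (hlym.trans ?_) (by omega : 0 < k - j)
    calc _ ≤ ecount (𝒢.filter (e ⊆ ·)) (k - 1) * ((k - j) * (r - 1)) :=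
          Nat.mul_le_mul_left _ hlink_vertices
      _ = _ := by ring
  have hsplitk := ecount_filter_add_ecount_filter_not 𝒢 (e ⊆ ·) k
  have hsplitk1 := ecount_filter_add_ecount_filter_not 𝒢 (e ⊆ ·) (k - 1)
  rw [← hsplitk, ← hsplitk1, mul_add] at hcount
  omega

/-- Let `𝒢` be a `k`-complex with `e_k(𝒢) ≥ (r-1)·e_{k-1}(𝒢) + 1`, and
let `e` be a `j`-edge of `𝒢` (with `0 ≤ j ≤ k-1`) lying in fewer than `(k-j)·r` edges of
`𝒢^(j+1)`. Then the `k`-complex `𝒢'` obtained by deleting `e` and every edge containing it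
satisfies `e_k(𝒢') ≥ (r-1)·e_{k-1}(𝒢') + 1`. -/
theorem delete_low_degree (k r j : ℕ) (hj : j + 1 ≤ k) (𝒢 : Finset (Finset V))
    (hdown : ∀ e ∈ 𝒢, ∀ f, f ⊆ e → f ∈ 𝒢)
    (hbound : ∀ e ∈ 𝒢, e.card ≤ k)
    (hcount : (r - 1) * ecount 𝒢 (k - 1) + 1 ≤ ecount 𝒢 k)
    (e : Finset V) (he : e ∈ 𝒢) (hecard : e.card = j)
    (hdeg : (𝒢.filter fun f => f.card = j + 1 ∧ e ⊆ f).card < (k - j) * r) :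
    (r - 1) * ecount (𝒢.filter fun f => ¬ e ⊆ f) (k - 1) + 1 ≤
      ecount (𝒢.filter fun f => ¬ e ⊆ f) k :=
  delete_low_degree_general k r j hj 𝒢 hdown hcount e hecard hdeg
end

section
/- Let k, r be natural numbers and let 𝒢 be a k-complex satisfying e_k(𝒢) ≥ (r-1)·e_{k-1}(𝒢) + 1. Then 𝒢 has at least kr vertices. -/
open Finset

variable {V : Type*} [DecidableEq V]

/-!
Double counting the pairs `f ⊂ e` with `#e = k`, `#f = k - 1` (the local LYM inequality) gives
`k · e_k ≤ (n - k + 1) · e_{k-1}` for a down-closed family on `n` vertices: each `k`-edge has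
`k` facets, all of them edges, and each `(k-1)`-edge extends in at most `n - k + 1` ways.
Together with `e_k > (r - 1) · e_{k-1}` this forces `n - k + 1 > k (r - 1)`, i.e. `n ≥ k r`.
-/

open scoped FinsetFamily

lemma shadow_filter_card_eq_subset_filter_card_eq {𝒢 : Finset (Finset V)}
    (hdown : ∀ e ∈ 𝒢, ∀ f, f ⊆ e → f ∈ 𝒢) (k : ℕ) :
    ∂ (𝒢.filter fun e => #e = k) ⊆ 𝒢.filter fun e => #e = k - 1 := by
  intro f hf
  obtain ⟨e, he, hfe, hcard⟩ := mem_shadow_iff_exists_mem_card_add_one.mp hf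
  rw [mem_filter] at he ⊢
  exact ⟨hdown e he.1 f hfe, by omega⟩

lemma ecount_mul_le_ecount_pred_mul [Fintype V] {𝒢 : Finset (Finset V)}
    (hdown : ∀ e ∈ 𝒢, ∀ f, f ⊆ e → f ∈ 𝒢) (k : ℕ) :
    ecount 𝒢 k * k ≤ ecount 𝒢 (k - 1) * (Fintype.card V - k + 1) :=
  calc ecount 𝒢 k * k
      ≤ #(∂ (𝒢.filter fun e => #e = k)) * (Fintype.card V - k + 1) :=
        local_lubell_yamamoto_meshalkin_inequality_mul fun _ he => (mem_filter.mp he).2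
    _ ≤ ecount 𝒢 (k - 1) * (Fintype.card V - k + 1) := by
        gcongr
        exact card_le_card (shadow_filter_card_eq_subset_filter_card_eq hdown k)

lemma mul_le_of_mul_le_mul_sub_add_one {k r n a b : ℕ} (hkn : k ≤ n)
    (hab : (r - 1) * b + 1 ≤ a) (hdc : a * k ≤ b * (n - k + 1)) : k * r ≤ n := by
  obtain _ | k := k
  · simp
  obtain _ | r := r
  · simp
  by_contra! hlt
  have hslack : n - (k + 1) + 1 ≤ (k + 1) * r := by
    rw [Nat.mul_succ] at hlt
    omega
  simp only [Nat.add_sub_cancel] at hab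
  nlinarith [Nat.mul_le_mul_left b hslack, Nat.mul_le_mul_right (k + 1) hab]

theorem vertex_lower_bound_general [Fintype V] (k r : ℕ) (𝒢 : Finset (Finset V))
    (hdown : ∀ e ∈ 𝒢, ∀ f, f ⊆ e → f ∈ 𝒢)
    (hcount : (r - 1) * ecount 𝒢 (k - 1) + 1 ≤ ecount 𝒢 k) :
    k * r ≤ Fintype.card V := by
  obtain ⟨e, he⟩ : (𝒢.filter fun e => #e = k).Nonempty :=
    card_pos.mp (by unfold ecount at hcount; omega)
  have hk : k ≤ Fintype.card V := (mem_filter.mp he).2 ▸ card_le_univ e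
  exact mul_le_of_mul_le_mul_sub_add_one hk hcount (ecount_mul_le_ecount_pred_mul hdown k)

/-- A `k`-complex `𝒢` with `e_k(𝒢) ≥ (r-1)·e_{k-1}(𝒢) + 1` in which every
vertex lies in some edge has at least `k·r` vertices. -/
theorem vertex_lower_bound [Fintype V] (k r : ℕ) (𝒢 : Finset (Finset V))
    (hdown : ∀ e ∈ 𝒢, ∀ f, f ⊆ e → f ∈ 𝒢)
    (hbound : ∀ e ∈ 𝒢, e.card ≤ k)
    (hcover : ∀ v : V, ∃ e ∈ 𝒢, v ∈ e)
    (hcount : (r - 1) * ecount 𝒢 (k - 1) + 1 ≤ ecount 𝒢 k) :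
    k * r ≤ Fintype.card V :=
  vertex_lower_bound_general k r 𝒢 hdown hcount
end
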